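/- Let L ≥ 2 and 1 ≤ w_s ≤ L−1 be integers, and let δ be a real number with 0 < δ < δ* := 2(w_s/L)(1−w_s/L). Set ũ = δL/4. Then γ(L,δ,w_s/L) ≤ (1/L)·log C(L,w_s) − ((⌈ũ⌉−ũ)/L)·log C(w_s,⌊ũ⌋) − ((1+ũ−⌈ũ⌉)/L)·log C(w_s,⌈ũ⌉) − ((⌈ũ⌉−ũ)/L)·log C(L−w_s,⌊ũ⌋) − ((1+ũ−⌈ũ⌉)/L)·log C(L−w_s,⌈ũ⌉) − (1/L)·h(⌈ũ⌉−ũ), where C(a,b) denotes the binomial coefficient (asymptotic sphere-packing bound for CSCCs). -/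

import Mathlib

open Finset Filter

/-- Weight (number of ones) of a binary word. -/
def wt {n : ℕ} (x : Fin n → Bool) : ℕ := (Finset.univ.filter fun i => x i = true).card

/-- The index (in a word of length `m * L`) of position `j` of subblock `i`. -/
def subIdx (m L : ℕ) (i : Fin m) (j : Fin L) : Fin (m * L) :=
  ⟨i.val * L + j.val, by
    have hj : j.val < L := j.isLt
    have hi : i.val + 1 ≤ m := i.isLt
    calc i.val * L + j.val < i.val * L + L := Nat.add_lt_add_left hj _
      _ = (i.val + 1) * L := by ring
      _ ≤ m * L := Nat.mul_le_mul hi (Nat.le_refl L)⟩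

/-- The `i`-th subblock (of length `L`) of a binary word of length `m * L`. -/
def subblock (m L : ℕ) (x : Fin (m * L) → Bool) (i : Fin m) : Fin L → Bool :=
  fun j => x (subIdx m L i j)

/-- The CSCC space: binary words of length `m * L` each of whose `m` subblocks of
length `L` has weight exactly `w`. -/
def CSCCspace (m L w : ℕ) : Set (Fin (m * L) → Bool) :=
  {x | ∀ i : Fin m, wt (subblock m L x i) = w}

/-- The SECC space: binary words of length `m * L` each of whose `m` subblocks of
length `L` has weight at least `w`. -/
def SECCspace (m L w : ℕ) : Set (Fin (m * L) → Bool) :=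
  {x | ∀ i : Fin m, w ≤ wt (subblock m L x i)}

/-- A code with minimum distance `d` inside the space `Sp`. -/
def isCode {n : ℕ} (Sp : Set (Fin n → Bool)) (d : ℕ) (C : Finset (Fin n → Bool)) : Prop :=
  (↑C : Set (Fin n → Bool)) ⊆ Sp ∧ ∀ x ∈ C, ∀ y ∈ C, x ≠ y → d ≤ hammingDist x y

/-- The ball of radius `t` around `x`, taken inside the space `Sp`. -/
def ball {n : ℕ} (Sp : Set (Fin n → Bool)) (x : Fin n → Bool) (t : ℕ) :
    Set (Fin n → Bool) :=
  {y | y ∈ Sp ∧ hammingDist x y ≤ t}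

/-- `C(m,L,d,w)`: the maximum size of an `(m,L,d,w)`-CSCC. -/
noncomputable def maxCSCC (m L d w : ℕ) : ℕ :=
  sSup {k | ∃ C : Finset (Fin (m * L) → Bool), isCode (CSCCspace m L w) d C ∧ C.card = k}

/-- `S(m,L,d,w)`: the maximum size of an `(m,L,d,w)`-SECC. -/
noncomputable def maxSECC (m L d w : ℕ) : ℕ :=
  sSup {k | ∃ C : Finset (Fin (m * L) → Bool), isCode (SECCspace m L w) d C ∧ C.card = k}

/-- `A(n,d,w)`: the maximum size of a constant weight code. -/
noncomputable def maxCWC (n d w : ℕ) : ℕ :=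
  sSup {k | ∃ C : Finset (Fin n → Bool), isCode {x | wt x = w} d C ∧ C.card = k}

/-- `H(n,d,w)`: the maximum size of a heavy weight code. -/
noncomputable def maxHWC (n d w : ℕ) : ℕ :=
  sSup {k | ∃ C : Finset (Fin n → Bool), isCode {x | w ≤ wt x} d C ∧ C.card = k}

/-- `A(n,d)`: the maximum size of a binary code of length `n` and distance `d`. -/
noncomputable def maxBinary (n d : ℕ) : ℕ :=
  sSup {k | ∃ C : Finset (Fin n → Bool),
    (∀ x ∈ C, ∀ y ∈ C, x ≠ y → d ≤ hammingDist x y) ∧ C.card = k}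

/-- `A_q(n,d)`: the maximum size of a `q`-ary code of length `n` and distance `d`. -/
noncomputable def maxQary (q n d : ℕ) : ℕ :=
  sSup {k | ∃ C : Finset (Fin n → Fin q),
    (∀ x ∈ C, ∀ y ∈ C, x ≠ y → d ≤ hammingDist x y) ∧ C.card = k}

/-- The size of a radius-`r` CSCC ball: the sum over all tuples `(u_1, …, u_m)` with
`0 ≤ u_i ≤ min{w, L-w}` and `2(u_1 + ⋯ + u_m) ≤ r` of `∏ i, C(w,u_i)·C(L-w,u_i)`. -/
def csccBallSize (m L w r : ℕ) : ℕ :=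
  ∑ u ∈ (Finset.univ : Finset (Fin m → Fin (min w (L - w) + 1))).filter
      (fun u => 2 * (∑ i, (u i : ℕ)) ≤ r),
    ∏ i, (w.choose (u i : ℕ)) * ((L - w).choose (u i : ℕ))

/-- The binary entropy function (base-2 logarithms, `h 0 = h 1 = 0`). -/
noncomputable def binent (p : ℝ) : ℝ :=
  -(p * Real.logb 2 p) - (1 - p) * Real.logb 2 (1 - p)

/-- The asymptotic CSCC rate `γ(L,δ,w/L)`. -/
noncomputable def gammaRate (L : ℕ) (δ : ℝ) (w : ℕ) : ℝ :=
  Filter.limsup (fun m : ℕ =>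
    Real.logb 2 (maxCSCC m L ⌊(m : ℝ) * L * δ⌋₊ w) / ((m : ℝ) * L)) Filter.atTop

/-- The asymptotic SECC rate `σ(L,δ,w/L)`. -/
noncomputable def sigmaRate (L : ℕ) (δ : ℝ) (w : ℕ) : ℝ :=
  Filter.limsup (fun m : ℕ =>
    Real.logb 2 (maxSECC m L ⌊(m : ℝ) * L * δ⌋₊ w) / ((m : ℝ) * L)) Filter.atTop

/-!
Sphere packing. Balls of radius `⌊(d - 1) / 2⌋` around the codewords are disjoint subsets of the
CSCC space, which has `C(L, w) ^ m` words, so `|code| * |ball| ≤ C(L, w) ^ m`. The ball around `x`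
contains every word whose `i`-th block arises from that of `x` by swapping `u i` ones with `u i`
zeros, as long as `2 * ∑ u i ≤ (d - 1) / 2`. With `ũ = δ L / 4`, taking `u i = ⌈ũ⌉` on about
`β m` blocks, `β = 1 + ũ - ⌈ũ⌉`, and `u i = ⌈ũ⌉ - 1` on the others, and bounding
`C(m, β m) ≥ 2 ^ (m h(β)) / (m + 1)` by the largest term of the binomial expansion of
`(β m + (1 - β) m) ^ m`, the logarithm of the ball size divided by `m L` tends to the subtracted
terms of the bound. When `ũ` is not an integer `⌈ũ⌉ - 1 = ⌊ũ⌋`; otherwise the `⌊ũ⌋` terms carry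
weight `0`.
-/

open Real Topology

namespace Nat

theorem choose_mul_pow_mul_pow_le {n k i : ℕ} (hk : k ≤ n) (hi : i ≤ n) :
    n.choose i * k ^ i * (n - k) ^ (n - i) ≤ n.choose k * k ^ k * (n - k) ^ (n - k) := by
  set t : ℕ → ℕ := fun i => n.choose i * k ^ i * (n - k) ^ (n - i)
  -- `t` is unimodal with mode `k`: `t a` and `t (a + 1)` compare like `(n - k) * (a + 1)` and
  -- `(n - a) * k`
  have step : ∀ a < n, ∃ X, t a * (a + 1) = X * ((n - k) * (a + 1)) ∧
      t (a + 1) * (a + 1) = X * ((n - a) * k) := fun a ha =>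
    ⟨n.choose a * k ^ a * (n - k) ^ (n - (a + 1)), by
      simp only [t]; rw [show n - a = n - (a + 1) + 1 by omega]; ring, by
      calc t (a + 1) * (a + 1)
          = n.choose (a + 1) * (a + 1) * (k ^ (a + 1) * (n - k) ^ (n - (a + 1))) := by ring
        _ = _ := by rw [choose_succ_right_eq]; ring⟩
  have mono : MonotoneOn t (Set.Iic k) := by
    refine monotoneOn_of_le_add_one Set.ordConnected_Iic fun a _ _ ha => ?_
    rw [Set.mem_Iic] at ha
    obtain ⟨X, h₁, h₂⟩ := step a (by omega)
    refine Nat.le_of_mul_le_mul_right (h₁.trans_le ?_ |>.trans h₂.ge) a.succ_pos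
    exact Nat.mul_le_mul_left _ (Nat.mul_le_mul (by omega) ha)
  have anti : AntitoneOn t (Set.Icc k n) := by
    refine antitoneOn_of_add_one_le Set.ordConnected_Icc fun a _ ha ha' => ?_
    rw [Set.mem_Icc] at ha ha'
    obtain ⟨X, h₁, h₂⟩ := step a (by omega)
    refine Nat.le_of_mul_le_mul_right (h₂.trans_le ?_ |>.trans h₁.ge) a.succ_pos
    exact Nat.mul_le_mul_left _ (Nat.mul_le_mul (by omega) (by omega))
  rcases le_total i k with hik | hki
  · exact mono (Set.mem_Iic.2 hik) (Set.mem_Iic.2 le_rfl) hik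
  · exact anti ⟨le_rfl, hk⟩ ⟨hki, hi⟩ hki

theorem pow_self_le_succ_mul_choose_mul_pow_mul_pow {n k : ℕ} (hk : k ≤ n) :
    n ^ n ≤ (n + 1) * (n.choose k * k ^ k * (n - k) ^ (n - k)) := by
  calc n ^ n = (k + (n - k)) ^ n := by rw [Nat.add_sub_cancel' hk]
    _ = ∑ i ∈ range (n + 1), n.choose i * k ^ i * (n - k) ^ (n - i) := by
        rw [add_pow]; exact sum_congr rfl fun i _ => by rw [Nat.cast_id]; ring
    _ ≤ ∑ _i ∈ range (n + 1), n.choose k * k ^ k * (n - k) ^ (n - k) :=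
        sum_le_sum fun i hi => choose_mul_pow_mul_pow_le hk (Nat.lt_succ_iff.1 (mem_range.1 hi))
    _ = _ := by rw [sum_const, card_range, smul_eq_mul]

end Nat

theorem binent_eq_binEntropy_div (p : ℝ) : binent p = binEntropy p / log 2 := by
  simp only [binent, binEntropy, logb, log_inv]
  ring

theorem binent_one_sub (p : ℝ) : binent (1 - p) = binent p := by
  rw [binent_eq_binEntropy_div, binEntropy_one_sub, binent_eq_binEntropy_div]

theorem continuous_binent : Continuous binent := by
  simpa only [funext binent_eq_binEntropy_div] using binEntropy_continuous.div_const (log 2)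

theorem natCast_mul_binEntropy_div {n k : ℕ} (hk : k ≤ n) :
    n * binEntropy (k / n) = n * log n - k * log k - (n - k : ℕ) * log (n - k : ℕ) := by
  rcases Nat.eq_zero_or_pos n with rfl | hn
  · simp [Nat.le_zero.1 hk]
  have hn' : (n : ℝ) ≠ 0 := by positivity
  have mul_log_div : ∀ x : ℝ, x * log (x / n) = x * log x - x * log n := fun x => by
    rcases eq_or_ne x 0 with rfl | hx
    · simp
    · rw [log_div hx hn']; ring
  have hsub : 1 - (k : ℝ) / n = (n - k : ℕ) / n := by
    rw [Nat.cast_sub hk]; field_simp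
  calc n * binEntropy (k / n)
      = -(n * (k / n) * log (k / n)) - n * ((n - k : ℕ) / n) * log ((n - k : ℕ) / n) := by
        rw [binEntropy_eq_negMulLog_add_negMulLog_one_sub, hsub]; simp only [negMulLog]; ring
    _ = _ := by
        rw [mul_div_cancel₀ _ hn', mul_div_cancel₀ _ hn', mul_log_div, mul_log_div,
          Nat.cast_sub hk]
        ring

theorem natCast_mul_binent_div_le {n k : ℕ} (hk : k ≤ n) :
    n * binent (k / n) ≤ logb 2 (n.choose k) + logb 2 (n + 1) := by
  have hpow : ∀ a : ℕ, (a : ℝ) ^ a ≠ 0 := fun a => by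
    rcases Nat.eq_zero_or_pos a with rfl | ha
    · simp
    · positivity
  have hchoose : (n.choose k : ℝ) ≠ 0 := by exact_mod_cast (Nat.choose_pos hk).ne'
  have hcount :
      (n : ℝ) ^ n ≤ (n + 1) * (n.choose k * (k : ℝ) ^ k * ((n - k : ℕ) : ℝ) ^ (n - k)) := by
    exact_mod_cast Nat.pow_self_le_succ_mul_choose_mul_pow_mul_pow hk
  have hlog := log_le_log ((hpow n).lt_of_le' (by positivity)) hcount
  rw [log_pow, log_mul (by positivity) (mul_ne_zero (mul_ne_zero hchoose (hpow _)) (hpow _)),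
    log_mul (mul_ne_zero hchoose (hpow _)) (hpow _),
    log_mul hchoose (hpow _), log_pow, log_pow] at hlog
  have hlog2 := log_pos one_lt_two
  rw [binent_eq_binEntropy_div, logb, logb, ← mul_div_assoc, ← add_div,
    div_le_div_iff_of_pos_right hlog2, natCast_mul_binEntropy_div hk]
  linarith

section Blocks

variable {m L : ℕ}

theorem subIdx_eq_finProdFinEquiv (i : Fin m) (j : Fin L) :
    subIdx m L i j = finProdFinEquiv (i, j) :=
  Fin.ext (by simp [subIdx, finProdFinEquiv_apply_val]; ring)

def subblockEquiv (m L : ℕ) : (Fin (m * L) → Bool) ≃ (Fin m → Fin L → Bool) :=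
  (finProdFinEquiv.arrowCongr (Equiv.refl Bool)).symm.trans (Equiv.curry _ _ _)

@[simp]
theorem subblockEquiv_apply (x : Fin (m * L) → Bool) : subblockEquiv m L x = subblock m L x := by
  funext i j
  simp [subblockEquiv, subblock, subIdx_eq_finProdFinEquiv]

theorem hammingDist_eq_sum_subblock (x y : Fin (m * L) → Bool) :
    hammingDist x y = ∑ i, hammingDist (subblock m L x i) (subblock m L y i) := by
  simp only [hammingDist, card_filter]
  rw [← (finProdFinEquiv (m := m) (n := L)).sum_comp, Fintype.sum_prod_type]
  simp [subblock, subIdx_eq_finProdFinEquiv]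

end Blocks

namespace Finset

variable {α : Type*} [DecidableEq α] {A B S : Finset α}

theorem union_inter_of_subset_of_disjoint (hA : A ⊆ S) (hB : Disjoint B S) : (A ∪ B) ∩ S = A := by
  rw [union_inter_distrib_right, inter_eq_left.2 hA, disjoint_iff_inter_eq_empty.1 hB, union_empty]

theorem union_sdiff_of_subset_of_disjoint (hA : A ⊆ S) (hB : Disjoint B S) : (A ∪ B) \ S = B := by
  rw [union_sdiff_distrib, sdiff_eq_empty_iff_subset.2 hA, empty_union,
    sdiff_eq_self_of_disjoint hB]

end Finset

section Sphere

def flipOn {ι : Type*} [DecidableEq ι] (v : ι → Bool) (D : Finset ι) : ι → Bool :=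
  fun j => xor (v j) (decide (j ∈ D))

theorem hammingDist_flipOn {ι : Type*} [Fintype ι] [DecidableEq ι] (v : ι → Bool)
    (D : Finset ι) : hammingDist v (flipOn v D) = D.card := by
  have hne : ∀ j, v j ≠ flipOn v D j ↔ j ∈ D := fun j => by
    unfold flipOn; cases v j <;> by_cases h : j ∈ D <;> simp [h]
  simp only [hammingDist, hne, filter_mem_eq_inter, univ_inter]

theorem flipOn_injective {ι : Type*} [DecidableEq ι] (v : ι → Bool) :
    Function.Injective (flipOn v) := fun D D' h => by
  ext j
  simpa [flipOn] using congrFun h j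

variable {n : ℕ}

def ones (v : Fin n → Bool) : Finset (Fin n) := {j | v j = true}

theorem wt_eq_card_ones (v : Fin n → Bool) : wt v = (ones v).card := rfl

theorem ones_flipOn_union {v : Fin n → Bool} {A B : Finset (Fin n)} (hA : A ⊆ ones v)
    (hB : B ⊆ (ones v)ᶜ) : ones (flipOn v (A ∪ B)) = ones v \ A ∪ B := by
  ext j
  have hAv := @hA j
  have hBv := @hB j
  by_cases hjA : j ∈ A <;> by_cases hjB : j ∈ B <;> cases hv : v j <;>
    simp_all [ones, flipOn]

theorem wt_flipOn_union {v : Fin n → Bool} {A B : Finset (Fin n)} (hA : A ⊆ ones v)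
    (hB : B ⊆ (ones v)ᶜ) : wt (flipOn v (A ∪ B)) = wt v - A.card + B.card := by
  have hdisj : Disjoint (ones v \ A) B :=
    (disjoint_of_subset_right hB disjoint_compl_right).mono_left sdiff_subset
  rw [wt_eq_card_ones, ones_flipOn_union hA hB, card_union_of_disjoint hdisj,
    card_sdiff_of_subset hA, wt_eq_card_ones]

def sameWeightSphere (v : Fin n → Bool) (u : ℕ) : Finset (Fin n → Bool) :=
  {z | wt z = wt v ∧ hammingDist v z = 2 * u}

theorem choose_mul_choose_le_card_sameWeightSphere (v : Fin n → Bool) (u : ℕ) :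
    (wt v).choose u * (n - wt v).choose u ≤ (sameWeightSphere v u).card := by
  set S := ones v
  have hSc : Sᶜ.card = n - wt v := by rw [card_compl, Fintype.card_fin]; rfl
  calc (wt v).choose u * (n - wt v).choose u = (S.powersetCard u ×ˢ Sᶜ.powersetCard u).card := by
        rw [card_product, card_powersetCard, card_powersetCard, hSc]; rfl
    _ ≤ _ := by
      refine card_le_card_of_injOn (fun AB => flipOn v (AB.1 ∪ AB.2)) ?_ ?_
      · rintro ⟨A, B⟩ hAB
        simp only [coe_product, Set.mem_prod, mem_coe, mem_powersetCard] at hAB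
        obtain ⟨⟨hA, rfl⟩, hB, hBA⟩ := hAB
        have hdisj : Disjoint A B :=
          disjoint_of_subset_left hA (disjoint_of_subset_right hB disjoint_compl_right)
        simp only [sameWeightSphere, coe_filter, mem_univ, true_and, Set.mem_ofPred]
        have hAw : #A ≤ wt v := card_le_card hA
        rw [wt_flipOn_union hA hB, hammingDist_flipOn, card_union_of_disjoint hdisj, hBA]
        omega
      · rintro ⟨A, B⟩ hAB ⟨A', B'⟩ hAB' h
        simp only [coe_product, Set.mem_prod, mem_coe, mem_powersetCard] at hAB hAB'
        have hBS := disjoint_of_subset_left hAB.2.1 disjoint_compl_left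
        have hBS' := disjoint_of_subset_left hAB'.2.1 disjoint_compl_left
        have hU := flipOn_injective v h
        exact Prod.ext
          (by rw [← union_inter_of_subset_of_disjoint hAB.1.1 hBS, hU,
            union_inter_of_subset_of_disjoint hAB'.1.1 hBS'])
          (by rw [← union_sdiff_of_subset_of_disjoint hAB.1.1 hBS, hU,
            union_sdiff_of_subset_of_disjoint hAB'.1.1 hBS'])

end Sphere

section Packing

theorem card_wt_eq (n w : ℕ) : ({v | wt v = w} : Finset (Fin n → Bool)).card = n.choose w := by
  rw [show n.choose w = (powersetCard w (univ : Finset (Fin n))).card by simp]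
  refine card_nbij' ones (fun s j => decide (j ∈ s)) (fun v hv => ?_) (fun s hs => ?_)
    (fun v _ => ?_) (fun s _ => ?_)
  · rw [mem_coe, Finset.mem_filter] at hv
    rw [mem_coe, mem_powersetCard]
    exact ⟨subset_univ _, hv.2⟩
  · rw [mem_coe, mem_powersetCard] at hs
    rw [mem_coe, Finset.mem_filter]
    simpa [wt] using hs.2
  · funext j; simp [ones]
  · ext j; simp [ones]

variable {m L w : ℕ}

theorem ncard_CSCCspace : (CSCCspace m L w).ncard = L.choose w ^ m := by
  have hpre : CSCCspace m L w = subblockEquiv m L ⁻¹'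
      ↑(Fintype.piFinset fun _ : Fin m => ({v | wt v = w} : Finset (Fin L → Bool))) := by
    ext x; simp [CSCCspace]
  rw [hpre, Set.ncard_preimage_of_injective_subset_range (subblockEquiv m L).injective
    (by simp), Set.ncard_coe_finset, Fintype.card_piFinset, prod_const, card_wt_eq, card_univ,
    Fintype.card_fin]

theorem csccBallSize_le_ncard_ball {x : Fin (m * L) → Bool} (hx : x ∈ CSCCspace m L w) (r : ℕ) :
    csccBallSize m L w r ≤ (ball (CSCCspace m L w) x r).ncard := by
  let sphereProd (u : Fin m → ℕ) : Finset (Fin (m * L) → Bool) :=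
    (Fintype.piFinset fun i => sameWeightSphere (subblock m L x i) (u i)).map
      (subblockEquiv m L).symm.toEmbedding
  have mem_sphereProd : ∀ u y, y ∈ sphereProd u ↔ ∀ i,
      wt (subblock m L y i) = w ∧ hammingDist (subblock m L x i) (subblock m L y i) = 2 * u i := by
    intro u y
    simp [sphereProd, Finset.mem_map_equiv, sameWeightSphere, hx _]
  set U := ({u | 2 * ∑ i, (u i : ℕ) ≤ r} : Finset (Fin m → Fin (min w (L - w) + 1)))
  calc csccBallSize m L w r ≤ ∑ u ∈ U, (sphereProd fun i => u i).card := sum_le_sum fun u _ => by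
        rw [card_map, Fintype.card_piFinset]
        refine prod_le_prod (fun _ _ => Nat.zero_le _) fun i _ => ?_
        simpa [hx i] using choose_mul_choose_le_card_sameWeightSphere (subblock m L x i) (u i)
    _ = (U.biUnion fun u => sphereProd fun i => u i).card := by
        refine (card_biUnion fun u _ u' _ huu' => disjoint_left.2 fun y hy hy' => huu' ?_).symm
        rw [mem_sphereProd] at hy hy'
        funext i
        have := (hy i).2.symm.trans (hy' i).2
        omega
    _ ≤ _ := by
        rw [← Set.ncard_coe_finset]
        refine Set.ncard_le_ncard (fun y hy => ?_) (Set.toFinite _)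
        simp only [coe_biUnion, mem_coe, Set.mem_iUnion, exists_prop] at hy
        obtain ⟨u, hu, hy⟩ := hy
        rw [mem_sphereProd] at hy
        refine ⟨fun i => (hy i).1, ?_⟩
        rw [hammingDist_eq_sum_subblock, sum_congr rfl fun i _ => (hy i).2, ← mul_sum]
        simpa [U] using hu

theorem isCode.card_mul_le_ncard {n d : ℕ} {Sp : Set (Fin n → Bool)} {C : Finset (Fin n → Bool)}
    (hC : isCode Sp d C) {B : ℕ} (hB : ∀ x ∈ C, B ≤ (ball Sp x ((d - 1) / 2)).ncard) :
    C.card * B ≤ Sp.ncard := by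
  classical
  set t := (d - 1) / 2
  have hdisj : (C : Set _).PairwiseDisjoint fun x => (ball Sp x t).toFinset := by
    intro x hx y hy hxy
    refine Set.disjoint_toFinset.2 (Set.disjoint_left.2 fun z hxz hyz => ?_)
    have hd := hC.2 x hx y hy hxy
    have hpos := hammingDist_pos.2 hxy
    have := hammingDist_triangle_right x y z
    have := hxz.2
    have := hyz.2
    omega
  calc C.card * B = ∑ _x ∈ C, B := by rw [sum_const, smul_eq_mul]
    _ ≤ ∑ x ∈ C, (ball Sp x t).toFinset.card :=
        sum_le_sum fun x hx => by rw [← Set.ncard_eq_toFinset_card']; exact hB x hx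
    _ = (C.biUnion fun x => (ball Sp x t).toFinset).card := (card_biUnion hdisj).symm
    _ ≤ Sp.toFinset.card := card_le_card fun y hy => by
        simp only [mem_biUnion, Set.mem_toFinset] at hy ⊢
        obtain ⟨x, -, hy, -⟩ := hy
        exact hy
    _ = Sp.ncard := (Set.ncard_eq_toFinset_card' _).symm

end Packing

section MaxCSCC

variable {m L w : ℕ}

theorem bddAbove_card_isCode {n : ℕ} (Sp : Set (Fin n → Bool)) (d : ℕ) :
    BddAbove {k | ∃ C : Finset (Fin n → Bool), isCode Sp d C ∧ C.card = k} :=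
  ⟨Fintype.card (Fin n → Bool), by rintro _ ⟨C, -, rfl⟩; exact card_le_univ C⟩

theorem exists_isCode_card_eq_maxCSCC (m L d w : ℕ) :
    ∃ C, isCode (CSCCspace m L w) d C ∧ C.card = maxCSCC m L d w :=
  Nat.sSup_mem (s := {k | ∃ C, isCode (CSCCspace m L w) d C ∧ C.card = k})
    ⟨0, ∅, ⟨by simp, by simp⟩, rfl⟩ (bddAbove_card_isCode _ _)

theorem one_le_maxCSCC (hw : w ≤ L) (d : ℕ) : 1 ≤ maxCSCC m L d w := by
  obtain ⟨x, hx⟩ : (CSCCspace m L w).Nonempty := Set.nonempty_of_ncard_ne_zero <| by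
    rw [ncard_CSCCspace]; exact pow_ne_zero _ (Nat.choose_pos hw).ne'
  exact le_csSup (bddAbove_card_isCode _ _) ⟨{x}, ⟨by simpa using hx, by simp⟩, card_singleton x⟩

theorem maxCSCC_mul_csccBallSize_le (m L d w : ℕ) :
    maxCSCC m L d w * csccBallSize m L w ((d - 1) / 2) ≤ L.choose w ^ m := by
  obtain ⟨C, hC, hcard⟩ := exists_isCode_card_eq_maxCSCC m L d w
  rw [← hcard, ← ncard_CSCCspace]
  exact hC.card_mul_le_ncard fun x hx => csccBallSize_le_ncard_ball (hC.1 hx) _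

theorem choose_mul_pow_mul_pow_le_csccBallSize {k u v r : ℕ} (hvu : v ≠ u)
    (hu : u ≤ min w (L - w)) (hv : v ≤ min w (L - w)) (hr : 2 * (k * u + (m - k) * v) ≤ r) :
    m.choose k * ((w.choose u * (L - w).choose u) ^ k * (w.choose v * (L - w).choose v) ^ (m - k))
      ≤ csccBallSize m L w r := by
  let prof (K : Finset (Fin m)) : Fin m → Fin (min w (L - w) + 1) :=
    fun i => if i ∈ K then ⟨u, Nat.lt_succ_of_le hu⟩ else ⟨v, Nat.lt_succ_of_le hv⟩
  have prof_val (K : Finset (Fin m)) (i : Fin m) : (prof K i : ℕ) = if i ∈ K then u else v := by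
    simp only [prof]; split_ifs <;> rfl
  have prof_injOn : Set.InjOn prof ↑(powersetCard k (univ : Finset (Fin m))) := fun K _ K' _ h => by
    ext i
    have := congrArg (fun p => (p i : ℕ)) h
    simp only [prof_val] at this
    split_ifs at this <;> simp_all
  calc _ = ∑ K ∈ powersetCard k univ,
        ∏ i, (w.choose (prof K i) * (L - w).choose (prof K i)) := by
        rw [sum_congr rfl fun K hK => ?_, sum_const, card_powersetCard, card_univ,
          Fintype.card_fin, smul_eq_mul]
        simp only [prof_val, apply_ite (fun a => w.choose a * (L - w).choose a)]
        simp [prod_ite, filter_not, card_sdiff, (mem_powersetCard.1 hK).2]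
    _ = ∑ p ∈ (powersetCard k univ).image prof,
        ∏ i, (w.choose (p i) * (L - w).choose (p i)) := by rw [sum_image prof_injOn]
    _ ≤ csccBallSize m L w r := by
        refine sum_le_sum_of_subset (image_subset_iff.2 fun K hK => mem_filter.2 ⟨mem_univ _, ?_⟩)
        simpa [prof_val, sum_ite, filter_not, card_sdiff, (mem_powersetCard.1 hK).2] using hr

end MaxCSCC

section Rate

theorem maxCSCC_mul_choose_mul_pow_mul_pow_le {m L w d k v : ℕ} (hk : k ≤ m) (hw : v + 1 ≤ w)
    (hLw : v + 1 ≤ L - w) (hd : 4 * (m * v + k) < d) :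
    maxCSCC m L d w * (m.choose k * ((w.choose (v + 1) * (L - w).choose (v + 1)) ^ k
      * (w.choose v * (L - w).choose v) ^ (m - k))) ≤ L.choose w ^ m := by
  have hr : 2 * (k * (v + 1) + (m - k) * v) ≤ (d - 1) / 2 := by
    obtain ⟨j, rfl⟩ := Nat.exists_eq_add_of_le hk
    rw [Nat.add_sub_cancel_left, show k * (v + 1) + j * v = (k + j) * v + k by ring]
    omega
  exact (Nat.mul_le_mul_left _ (choose_mul_pow_mul_pow_le_csccBallSize v.succ_ne_self.symm
    (le_min hw hLw) (le_min (by omega) (by omega)) hr)).trans (maxCSCC_mul_csccBallSize_le m L d w)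

theorem logb_maxCSCC_div_le {m L w d k v : ℕ} (hm : 0 < m) (hk : k ≤ m) (hw : v + 1 ≤ w)
    (hLw : v + 1 ≤ L - w) (hd : 4 * (m * v + k) < d) :
    logb 2 (maxCSCC m L d w) / (m * L) ≤ 1 / L * (logb 2 (L.choose w) - binent (k / m)
      + logb 2 (m + 1) / m - (1 - k / m) * (logb 2 (w.choose v) + logb 2 ((L - w).choose v))
      - k / m * (logb 2 (w.choose (v + 1)) + logb 2 ((L - w).choose (v + 1)))) := by
  have hcount := Nat.cast_le (α := ℝ) |>.2 (maxCSCC_mul_choose_mul_pow_mul_pow_le hk hw hLw hd)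
  push_cast at hcount
  have hchoose : ∀ {a b : ℕ}, b ≤ a → (0 : ℝ) < a.choose b := fun h => by
    exact_mod_cast Nat.choose_pos h
  have := hchoose hk
  have := hchoose hw
  have := hchoose hLw
  have := hchoose (a := w) (b := v) (by omega)
  have := hchoose (a := L - w) (b := v) (by omega)
  have hN : (0 : ℝ) < maxCSCC m L d w := by exact_mod_cast one_le_maxCSCC (by omega) d
  have hlog := logb_le_logb_of_le one_lt_two (by positivity) hcount
  rw [logb_mul (by positivity) (by positivity), logb_mul (by positivity) (by positivity),
    logb_mul (by positivity) (by positivity), logb_pow, logb_pow, logb_pow,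
    logb_mul (by positivity) (by positivity), logb_mul (by positivity) (by positivity),
    Nat.cast_sub hk] at hlog
  have hent := natCast_mul_binent_div_le hk
  have hL : (L : ℝ) ≠ 0 := by norm_cast; omega
  rw [div_le_iff₀ (by positivity)]
  calc logb 2 (maxCSCC m L d w) ≤ m * logb 2 (L.choose w) - m * binent (k / m) + logb 2 (m + 1)
        - (m - k) * (logb 2 (w.choose v) + logb 2 ((L - w).choose v))
        - k * (logb 2 (w.choose (v + 1)) + logb 2 ((L - w).choose (v + 1))) := by linarith
    _ = _ := by field_simp

end Rate

section Limits

theorem tendsto_natFloor_mul_sub_one_div {β : ℝ} (hβ : 0 < β) :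
    Tendsto (fun m : ℕ => (⌊β * m - 1⌋₊ : ℝ) / m) atTop (𝓝 β) := by
  have hlow : Tendsto (fun m : ℕ => β - 2 / m) atTop (𝓝 β) := by
    simpa using tendsto_const_nhds.sub (tendsto_const_div_atTop_nhds_zero_nat (2 : ℝ))
  refine tendsto_of_tendsto_of_tendsto_of_le_of_le' hlow tendsto_const_nhds ?_ ?_
  · filter_upwards [eventually_gt_atTop 0] with m hm
    have hm' : (0 : ℝ) < m := by exact_mod_cast hm
    rw [le_div_iff₀ hm', sub_mul, div_mul_cancel₀ _ hm'.ne']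
    linarith [Nat.sub_one_lt_floor (β * m - 1)]
  · filter_upwards [eventually_gt_atTop 0,
      (tendsto_natCast_atTop_atTop.const_mul_atTop hβ).eventually_ge_atTop 1] with m hm hβm
    have hm' : (0 : ℝ) < m := by exact_mod_cast hm
    rw [div_le_iff₀ hm']
    linarith [Nat.floor_le (sub_nonneg.2 hβm)]

theorem tendsto_logb_natCast_add_one_div :
    Tendsto (fun m : ℕ => logb 2 (m + 1) / m) atTop (𝓝 0) := by
  have h := ((tendsto_pow_log_div_mul_add_atTop 1 (-1) 1 one_ne_zero).comp
    (tendsto_atTop_add_const_right atTop 1 tendsto_natCast_atTop_atTop)).div_const (log 2)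
  rw [zero_div] at h
  refine h.congr fun m => ?_
  simp [logb, div_right_comm]

end Limits

theorem gammaRate_le {L w v : ℕ} {δ β : ℝ} (hvβ : v + β = δ * L / 4) (hβ0 : 0 < β) (hβ1 : β ≤ 1)
    (hw : v + 1 ≤ w) (hLw : v + 1 ≤ L - w) :
    gammaRate L δ w ≤ 1 / L * (logb 2 (L.choose w) - binent β
      - (1 - β) * (logb 2 (w.choose v) + logb 2 ((L - w).choose v))
      - β * (logb 2 (w.choose (v + 1)) + logb 2 ((L - w).choose (v + 1)))) := by
  set F : ℝ × ℝ → ℝ := fun p => 1 / L * (logb 2 (L.choose w) - binent p.1 + p.2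
      - (1 - p.1) * (logb 2 (w.choose v) + logb 2 ((L - w).choose v))
      - p.1 * (logb 2 (w.choose (v + 1)) + logb 2 ((L - w).choose (v + 1))))
  have hF : Continuous F := by have := continuous_binent; fun_prop
  -- blocks moved by `v + 1` rather than `v`; the `- 1` keeps the radius below `(d - 1) / 2`
  set k : ℕ → ℕ := fun m => ⌊β * m - 1⌋₊
  have hlim : Tendsto (fun m : ℕ => F ((k m : ℝ) / m, logb 2 (m + 1) / m)) atTop (𝓝 (F (β, 0))) :=
    (hF.tendsto _).comp ((tendsto_natFloor_mul_sub_one_div hβ0).prodMk_nhds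
      tendsto_logb_natCast_add_one_div)
  have hbound : ∀ᶠ m : ℕ in atTop, logb 2 (maxCSCC m L ⌊(m : ℝ) * L * δ⌋₊ w) / (m * L)
      ≤ F ((k m : ℝ) / m, logb 2 (m + 1) / m) := by
    filter_upwards [eventually_gt_atTop 0,
      (tendsto_natCast_atTop_atTop.const_mul_atTop hβ0).eventually_ge_atTop 1] with m hm hβm
    have hkm : (k m : ℝ) ≤ β * m - 1 := Nat.floor_le (sub_nonneg.2 hβm)
    refine logb_maxCSCC_div_le hm ?_ hw hLw ?_
    · have : (k m : ℝ) ≤ m := by nlinarith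
      exact_mod_cast this
    · refine Nat.lt_of_lt_of_le (Nat.lt_succ_self _) (Nat.le_floor ?_)
      have hmLδ : (m : ℝ) * L * δ = 4 * m * (v + β) := by rw [hvβ]; ring
      push_cast
      linarith
  have hcobdd : IsCoboundedUnder (· ≤ ·) atTop
      fun m : ℕ => logb 2 (maxCSCC m L ⌊(m : ℝ) * L * δ⌋₊ w) / (m * L) :=
    isCoboundedUnder_le_of_le atTop fun m =>
      div_nonneg (logb_nonneg one_lt_two (by exact_mod_cast one_le_maxCSCC (by omega) _))
        (by positivity)
  calc gammaRate L δ w ≤ limsup (fun m : ℕ => F ((k m : ℝ) / m, logb 2 (m + 1) / m)) atTop :=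
        limsup_le_limsup hbound hcobdd hlim.isBoundedUnder_le
    _ = F (β, 0) := hlim.limsup_eq
    _ = _ := by simp only [F, add_zero]

theorem natCeil_sub_mul_apply_natFloor (x : ℝ) (f : ℕ → ℝ) :
    (⌈x⌉₊ - x) * f ⌊x⌋₊ = (⌈x⌉₊ - x) * f (⌈x⌉₊ - 1) := by
  rcases eq_or_ne (⌈x⌉₊ : ℝ) x with h | h
  · simp [h]
  obtain h' | ⟨h', hpos⟩ : ⌊x⌋₊ = ⌈x⌉₊ - 1 ∨ ⌊x⌋₊ = ⌈x⌉₊ ∧ 0 < ⌈x⌉₊ := by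
    have := Nat.ceil_le_floor_add_one x
    have := Nat.floor_le_ceil x
    omega
  · rw [h']
  · have := Nat.floor_le (Nat.ceil_pos.1 hpos).le
    rw [h'] at this
    exact absurd (le_antisymm this (Nat.le_ceil x)) h

theorem pos_and_le_and_le_of_lt_two_mul_mul_one_sub {L w : ℕ} {δ : ℝ} (hδ0 : 0 < δ)
    (hδ : δ < 2 * ((w : ℝ) / L) * (1 - (w : ℝ) / L)) :
    0 < δ * L / 4 ∧ δ * L / 4 ≤ w ∧ δ * L / 4 ≤ (L - w : ℕ) := by
  have hL : (0 : ℝ) < L := by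
    rcases (Nat.cast_nonneg L : (0 : ℝ) ≤ L).lt_or_eq with hL | hL
    · exact hL
    · rw [← hL, div_zero] at hδ; linarith
  set p := (w : ℝ) / L
  have hw : (w : ℝ) = p * L := (div_mul_cancel₀ _ hL.ne').symm
  have hp0 : 0 ≤ p := by positivity
  have hp1 : p < 1 := by nlinarith
  have hwL : w ≤ L := by
    have : (w : ℝ) ≤ L := by nlinarith
    exact_mod_cast this
  have hδp : δ ≤ 2 * p := by nlinarith
  have hδp' : δ ≤ 2 * (1 - p) := by nlinarith
  rw [Nat.cast_sub hwL, hw]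
  refine ⟨by positivity, ?_, ?_⟩ <;>
    nlinarith [mul_le_mul_of_nonneg_right hδp hL.le, mul_le_mul_of_nonneg_right hδp' hL.le]

theorem stmt_13_general (L w : ℕ)
    (δ : ℝ) (hδ0 : 0 < δ)
    (hδ : δ < 2 * ((w : ℝ) / L) * (1 - (w : ℝ) / L)) :
    gammaRate L δ w ≤
      (1 / (L : ℝ)) * Real.logb 2 (L.choose w)
      - ((↑⌈δ * (L : ℝ) / 4⌉₊ - δ * (L : ℝ) / 4) / (L : ℝ)) *
          Real.logb 2 (w.choose ⌊δ * (L : ℝ) / 4⌋₊)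
      - ((1 + δ * (L : ℝ) / 4 - ↑⌈δ * (L : ℝ) / 4⌉₊) / (L : ℝ)) *
          Real.logb 2 (w.choose ⌈δ * (L : ℝ) / 4⌉₊)
      - ((↑⌈δ * (L : ℝ) / 4⌉₊ - δ * (L : ℝ) / 4) / (L : ℝ)) *
          Real.logb 2 ((L - w).choose ⌊δ * (L : ℝ) / 4⌋₊)
      - ((1 + δ * (L : ℝ) / 4 - ↑⌈δ * (L : ℝ) / 4⌉₊) / (L : ℝ)) *
          Real.logb 2 ((L - w).choose ⌈δ * (L : ℝ) / 4⌉₊)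
      - (1 / (L : ℝ)) * binent (↑⌈δ * (L : ℝ) / 4⌉₊ - δ * (L : ℝ) / 4) := by
  obtain ⟨hu0, huw, huL⟩ := pos_and_le_and_le_of_lt_two_mul_mul_one_sub hδ0 hδ
  set u := δ * L / 4
  have hceil : 1 ≤ ⌈u⌉₊ := Nat.ceil_pos.2 hu0
  have key := gammaRate_le (L := L) (w := w) (δ := δ) (v := ⌈u⌉₊ - 1) (β := 1 + u - ⌈u⌉₊)
    (by push_cast [Nat.cast_sub hceil]; ring) (by linarith [Nat.ceil_lt_add_one hu0.le])
    (by linarith [Nat.le_ceil u]) (by rw [Nat.sub_add_cancel hceil]; exact Nat.ceil_le.2 huw)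
    (by rw [Nat.sub_add_cancel hceil]; exact Nat.ceil_le.2 huL)
  rw [Nat.sub_add_cancel hceil, show 1 + u - ⌈u⌉₊ = 1 - (⌈u⌉₊ - u) by ring, binent_one_sub] at key
  refine key.trans_eq ?_
  have hfl := natCeil_sub_mul_apply_natFloor u fun j => logb 2 (w.choose j) + logb 2 ((L - w).choose j)
  linear_combination (1 / (L : ℝ)) * hfl

/-- Asymptotic sphere-packing bound for CSCCs (`L ≥ 2`, `0 < δ < δ*`). -/
theorem stmt_13 (L w : ℕ) (hL : 2 ≤ L) (hw1 : 1 ≤ w) (hw2 : w ≤ L - 1)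
    (δ : ℝ) (hδ0 : 0 < δ)
    (hδ : δ < 2 * ((w : ℝ) / L) * (1 - (w : ℝ) / L)) :
    gammaRate L δ w ≤
      (1 / (L : ℝ)) * Real.logb 2 (L.choose w)
      - ((↑⌈δ * (L : ℝ) / 4⌉₊ - δ * (L : ℝ) / 4) / (L : ℝ)) *
          Real.logb 2 (w.choose ⌊δ * (L : ℝ) / 4⌋₊)
      - ((1 + δ * (L : ℝ) / 4 - ↑⌈δ * (L : ℝ) / 4⌉₊) / (L : ℝ)) *
          Real.logb 2 (w.choose ⌈δ * (L : ℝ) / 4⌉₊)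
      - ((↑⌈δ * (L : ℝ) / 4⌉₊ - δ * (L : ℝ) / 4) / (L : ℝ)) *
          Real.logb 2 ((L - w).choose ⌊δ * (L : ℝ) / 4⌋₊)
      - ((1 + δ * (L : ℝ) / 4 - ↑⌈δ * (L : ℝ) / 4⌉₊) / (L : ℝ)) *
          Real.logb 2 ((L - w).choose ⌈δ * (L : ℝ) / 4⌉₊)
      - (1 / (L : ℝ)) * binent (↑⌈δ * (L : ℝ) / 4⌉₊ - δ * (L : ℝ) / 4) :=
  stmt_13_general L w δ hδ0 hδ
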